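/- For arbitrary positive costs c, let OR be the function with OR(a) = 1 if a i = true for some i and OR(a) = 0 otherwise, and let j₁,…,j_n list the indices in nondecreasing order of c i / p i. Then OPT(OR) = Σ_{t=1}^{n} c(j_t)·∏_{s<t} (1 − p(j_s)); that is, the nonadaptive strategy querying bits in nondecreasing order of c i / p i until a true bit is found (or all bits are queried) is optimal among all decision trees evaluating OR. -/

import Mathlib

/-!
Since no subtree of a node labelled `i` queries bit `i` again, the expected cost of a tree
satisfies `E(node i T₀ T₁) = c i + p i * E(T₁) + (1 - p i) * E(T₀)`. A tree computing OR must
query every bit on the all-`false` assignment, and discarding the subtrees entered on a `true`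
answer along that path shows that `E(T)` is at least the cost of querying the bits in that
order until a `true` one appears. An adjacent-exchange argument shows that among all orders
the one sorted by `c i / p i` is cheapest, and the chain of queries in that order attains it.
-/

open Finset

/-- Number of true bits of an assignment. -/
def N1 {n : ℕ} (a : Fin n → Bool) : ℕ :=
  (Finset.univ.filter (fun i => a i = true)).card

/-- Probability of an assignment. -/
noncomputable def pr {n : ℕ} (p : Fin n → ℝ) (a : Fin n → Bool) : ℝ :=
  ∏ i, if a i then p i else 1 - p i
/-- Binary decision trees over `n` bits, with natural-number leaf labels. -/
inductive DTree (n : ℕ) : Type where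
  | leaf : ℕ → DTree n
  | node : Fin n → DTree n → DTree n → DTree n

namespace DTree

/-- Output of the tree on assignment `a`. -/
def eval {n : ℕ} : DTree n → (Fin n → Bool) → ℕ
  | .leaf v, _ => v
  | .node i t0 t1, a => if a i then eval t1 a else eval t0 a

/-- Total cost of the queries made on assignment `a`. -/
noncomputable def cost {n : ℕ} (c : Fin n → ℝ) : DTree n → (Fin n → Bool) → ℝ
  | .leaf _, _ => 0
  | .node i t0 t1, a => c i + (if a i then cost c t1 a else cost c t0 a)

/-- The list of indices queried on assignment `a`, in order. -/
def path {n : ℕ} : DTree n → (Fin n → Bool) → List (Fin n)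
  | .leaf _, _ => []
  | .node i t0 t1, a => i :: (if a i then path t1 a else path t0 a)

/-- No index occurs twice on any root-to-leaf path (given already-used indices). -/
def Proper {n : ℕ} : DTree n → Finset (Fin n) → Prop
  | .leaf _, _ => True
  | .node i t0 t1, used =>
      i ∉ used ∧ Proper t0 (insert i used) ∧ Proper t1 (insert i used)

/-- Every root-to-leaf path queries all `n` indices (and no repeats). -/
def Full {n : ℕ} : DTree n → Finset (Fin n) → Prop
  | .leaf _, used => used = Finset.univ
  | .node i t0 t1, used =>
      i ∉ used ∧ Full t0 (insert i used) ∧ Full t1 (insert i used)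

end DTree
/-- Expected-cost-minimizing value over all decision trees evaluating `h`. -/
noncomputable def OPTcost {n : ℕ} (p c : Fin n → ℝ) (h : (Fin n → Bool) → ℕ) : ℝ :=
  sInf {x : ℝ | ∃ T : DTree n, T.Proper ∅ ∧ (∀ a, T.eval a = h a) ∧
    x = ∑ a : Fin n → Bool, T.cost c a * pr p a}

/-- `chainCost c q [j₁,…,jₘ] = Σ_t c jₜ · Π_{s<t} q jₛ`: expected cost of querying the
listed bits in order, continuing past each bit with probability `q` of that bit. -/
noncomputable def chainCost {n : ℕ} (c q : Fin n → ℝ) : List (Fin n) → ℝ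
  | [] => 0
  | i :: l => c i + q i * chainCost c q l

open Function

section Probability

variable {n : ℕ} (p : Fin n → ℝ)

lemma sum_pr : ∑ a : Fin n → Bool, pr p a = 1 := by
  simp only [pr]
  rw [← Fintype.prod_sum (fun (i : Fin n) (b : Bool) => if b then p i else 1 - p i)]
  simp

lemma pr_update_mul (a : Fin n → Bool) (i : Fin n) (b : Bool) :
    pr p (update a i b) * (if a i then p i else 1 - p i)
      = pr p a * (if b then p i else 1 - p i) := by
  have hpr : ∀ b, pr p (update a i b)
      = (if b then p i else 1 - p i) * ∏ j ∈ univ \ {i}, (if a j then p j else 1 - p j) := by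
    intro b
    simp only [pr, apply_update (fun j (x : Bool) => if x then p j else 1 - p j)]
    exact prod_update_of_mem (mem_univ i) _ _
  have ha : pr p a = pr p (update a i (a i)) := by rw [update_eq_self]
  rw [ha, hpr, hpr]
  ring

lemma sum_filter_true_mul_pr {i : Fin n} {g : (Fin n → Bool) → ℝ}
    (hg : ∀ a b, g (update a i b) = g a) :
    ∑ a with a i = true, g a * pr p a = p i * ∑ a, g a * pr p a := by
  set Y := ∑ a with a i = true, g a * pr p a
  set X := ∑ a with ¬a i = true, g a * pr p a
  have hsplit : Y + X = ∑ a, g a * pr p a := sum_filter_add_sum_filter_not _ _ _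
  -- flipping bit `i` matches the two halves, rescaling the weight by `(1 - p i) / p i`
  have hswap : Y * (1 - p i) = X * p i := by
    rw [sum_mul, sum_mul]
    refine sum_nbij' (update · i false) (update · i true) ?_ ?_ ?_ ?_ ?_ <;>
      simp only [update_self, update_idem, mem_filter, mem_univ, true_and, Bool.not_eq_true]
    · simp
    · simp
    · intro a ha; rw [← ha, update_eq_self]
    · intro a ha; rw [← ha, update_eq_self]
    · intro a ha
      have hpr := pr_update_mul p a i false
      simp only [ha, if_true, Bool.false_eq_true, if_false] at hpr
      rw [hg, mul_assoc, mul_assoc, hpr]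
  linear_combination hswap + p i * hsplit

lemma sum_ite_mul_pr {i : Fin n} {g h : (Fin n → Bool) → ℝ}
    (hg : ∀ a b, g (update a i b) = g a) (hh : ∀ a b, h (update a i b) = h a) :
    ∑ a, (if a i then g a else h a) * pr p a
      = p i * ∑ a, g a * pr p a + (1 - p i) * ∑ a, h a * pr p a := by
  have hsplit := sum_filter_add_sum_filter_not univ (fun a => a i = true) (fun a => h a * pr p a)
  simp only [ite_mul]
  rw [sum_ite, sum_filter_true_mul_pr p hg]
  linear_combination hsplit - sum_filter_true_mul_pr p hh

end Probability

namespace DTree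

variable {n : ℕ}

noncomputable def expectedCost (p c : Fin n → ℝ) : DTree n → ℝ
  | .leaf _ => 0
  | .node i t0 t1 => c i + p i * expectedCost p c t1 + (1 - p i) * expectedCost p c t0

lemma cost_update_of_mem (c : Fin n → ℝ) {T : DTree n} {used : Finset (Fin n)}
    (hT : T.Proper used) (a : Fin n → Bool) {i : Fin n} (hi : i ∈ used) (b : Bool) :
    T.cost c (update a i b) = T.cost c a := by
  induction T generalizing used with
  | leaf => rfl
  | node k t0 t1 ih0 ih1 =>
    obtain ⟨hk, h0, h1⟩ := hT
    have hki : k ≠ i := by rintro rfl; exact hk hi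
    simp only [cost, update_of_ne hki, ih0 h0 (mem_insert_of_mem hi),
      ih1 h1 (mem_insert_of_mem hi)]

theorem sum_cost_mul_pr_eq_expectedCost (p c : Fin n → ℝ) {T : DTree n} {used : Finset (Fin n)}
    (hT : T.Proper used) : ∑ a, T.cost c a * pr p a = T.expectedCost p c := by
  induction T generalizing used with
  | leaf => simp [cost, expectedCost]
  | node k t0 t1 ih0 ih1 =>
    obtain ⟨-, h0, h1⟩ := hT
    have hk := mem_insert_self k used
    simp only [cost, add_mul, sum_add_distrib, ← mul_sum, sum_pr, mul_one]
    rw [sum_ite_mul_pr p (cost_update_of_mem c h1 · hk) (cost_update_of_mem c h0 · hk),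
      ih0 h0, ih1 h1, expectedCost, add_assoc]

lemma expectedCost_nonneg {p c : Fin n → ℝ} (hp0 : ∀ i, 0 ≤ p i) (hp1 : ∀ i, p i ≤ 1)
    (hc : ∀ i, 0 ≤ c i) (T : DTree n) : 0 ≤ T.expectedCost p c := by
  induction T with
  | leaf => exact le_rfl
  | node k t0 t1 ih0 ih1 =>
    have := hp1 k
    have := hp0 k
    have := hc k
    rw [expectedCost]
    positivity

/-- The subtrees entered on a `true` answer along the all-`false` path have nonnegative
expected cost and can be dropped. -/
lemma chainCost_path_false_le_expectedCost {p c : Fin n → ℝ} (hp0 : ∀ i, 0 ≤ p i)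
    (hp1 : ∀ i, p i ≤ 1) (hc : ∀ i, 0 ≤ c i) (T : DTree n) :
    chainCost c (fun j => 1 - p j) (T.path fun _ => false) ≤ T.expectedCost p c := by
  induction T with
  | leaf => exact le_rfl
  | node k t0 t1 ih0 _ =>
    have h1 := mul_nonneg (hp0 k) (expectedCost_nonneg hp0 hp1 hc t1)
    have h0 := mul_le_mul_of_nonneg_left ih0 (sub_nonneg.2 (hp1 k))
    simp only [path, chainCost, expectedCost, Bool.false_eq_true, if_false]
    linarith

lemma Proper.nodup_path {T : DTree n} {used : Finset (Fin n)} (hT : T.Proper used)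
    (a : Fin n → Bool) : (T.path a).Nodup ∧ ∀ i ∈ T.path a, i ∉ used := by
  induction T generalizing used with
  | leaf => simp [path]
  | node k t0 t1 ih0 ih1 =>
    obtain ⟨hk, h0, h1⟩ := hT
    obtain ⟨hnd, hfresh⟩ : ((if a k then t1.path a else t0.path a).Nodup ∧
        ∀ i ∈ (if a k then t1.path a else t0.path a), i ∉ insert k used) := by
      split
      · exact ih1 h1
      · exact ih0 h0
    refine ⟨List.nodup_cons.2 ⟨fun hk' => hfresh k hk' (mem_insert_self k used), hnd⟩, ?_⟩
    rintro i (_ | ⟨_, hi⟩)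
    · exact hk
    · exact fun hiu => hfresh i hi (mem_insert_of_mem hiu)

lemma eval_eq_of_forall_mem_path {T : DTree n} {a a' : Fin n → Bool}
    (h : ∀ j ∈ T.path a, a j = a' j) : T.eval a' = T.eval a := by
  induction T with
  | leaf => rfl
  | node k t0 t1 ih0 ih1 =>
    have hk : a k = a' k := h k List.mem_cons_self
    simp only [eval, ← hk]
    split_ifs with hak
    · exact ih1 fun j hj => h j (by simp [path, hak, hj])
    · exact ih0 fun j hj => h j (by simp [path, hak, hj])

/-- Flipping a bit that is never queried on the all-`false` assignment would not change the
output, yet changes the value of OR. -/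
lemma mem_path_false_of_eval_eq_or {T : DTree n}
    (hT : ∀ a, T.eval a = if ∃ i, a i = true then 1 else 0) (i : Fin n) :
    i ∈ T.path fun _ => false := by
  by_contra hi
  have h := eval_eq_of_forall_mem_path (a' := update (fun _ => false) i true) fun j hj =>
    (update_of_ne (ne_of_mem_of_not_mem hj hi) true fun _ => false).symm
  rw [hT, hT, if_pos ⟨i, update_self ..⟩] at h
  simp at h

def chain : List (Fin n) → DTree n
  | [] => .leaf 0
  | i :: l => .node i (chain l) (.leaf 1)

lemma proper_chain {l : List (Fin n)} (hl : l.Nodup) {used : Finset (Fin n)}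
    (hused : ∀ i ∈ l, i ∉ used) : (chain l).Proper used := by
  induction l generalizing used with
  | nil => trivial
  | cons k l ih =>
    obtain ⟨hkl, hl⟩ := List.nodup_cons.1 hl
    refine ⟨hused k List.mem_cons_self, ih hl fun i hi hins => ?_, trivial⟩
    rcases mem_insert.1 hins with rfl | hiu
    · exact hkl hi
    · exact hused i (List.mem_cons_of_mem k hi) hiu

lemma eval_chain (l : List (Fin n)) (a : Fin n → Bool) :
    (chain l).eval a = if ∃ i ∈ l, a i = true then 1 else 0 := by
  induction l with
  | nil => simp [chain, eval]
  | cons k l ih => cases hk : a k <;> simp [chain, eval, hk, ih]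

lemma expectedCost_chain (p c : Fin n → ℝ) (l : List (Fin n)) :
    (chain l).expectedCost p c = chainCost c (fun j => 1 - p j) l := by
  induction l with
  | nil => rfl
  | cons k l ih => simp only [chain, expectedCost, chainCost, ih]; ring

end DTree

section Exchange

variable {n : ℕ} {p c : Fin n → ℝ}

/-- Swapping adjacent `x, j` into `j, x` changes the cost by `c j * p x - c x * p j`. -/
lemma chainCost_cons_append_le (hp1 : ∀ i, p i ≤ 1) {j : Fin n} (xs ys : List (Fin n))
    (hxs : ∀ x ∈ xs, c j * p x ≤ c x * p j) :
    chainCost c (fun i => 1 - p i) (j :: (xs ++ ys))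
      ≤ chainCost c (fun i => 1 - p i) (xs ++ j :: ys) := by
  induction xs with
  | nil => exact le_rfl
  | cons x xs ih =>
    have ih' := ih fun y hy => hxs y (List.mem_cons_of_mem x hy)
    have hx := hxs x List.mem_cons_self
    have step := mul_le_mul_of_nonneg_left ih' (sub_nonneg.2 (hp1 x))
    simp only [List.cons_append, chainCost] at ih' step ⊢
    nlinarith

lemma chainCost_le_of_perm (hp1 : ∀ i, p i ≤ 1) {l m : List (Fin n)}
    (hl : l.Pairwise fun i j => c i * p j ≤ c j * p i) (hm : m.Perm l) :
    chainCost c (fun i => 1 - p i) l ≤ chainCost c (fun i => 1 - p i) m := by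
  induction l generalizing m with
  | nil => rw [List.perm_nil.1 hm]
  | cons j l ih =>
    obtain ⟨hj, hl⟩ := List.pairwise_cons.1 hl
    obtain ⟨xs, ys, rfl⟩ := List.append_of_mem (hm.mem_iff.2 List.mem_cons_self)
    have hrest : (xs ++ ys).Perm l := (List.perm_middle.symm.trans hm).cons_inv
    have hxs : ∀ x ∈ xs, c j * p x ≤ c x * p j := by
      intro x hx
      rcases List.mem_cons.1 (hm.subset (List.mem_append_left _ hx)) with rfl | hxl
      · exact le_rfl
      · exact hj x hxl
    calc chainCost c (fun i => 1 - p i) (j :: l)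
        ≤ chainCost c (fun i => 1 - p i) (j :: (xs ++ ys)) := by
          have := mul_le_mul_of_nonneg_left (ih hl hrest) (sub_nonneg.2 (hp1 j))
          simp only [chainCost]
          linarith
      _ ≤ chainCost c (fun i => 1 - p i) (xs ++ j :: ys) := chainCost_cons_append_le hp1 xs ys hxs

end Exchange

theorem stmt13_general {n : ℕ} (p c : Fin n → ℝ)
    (hp : ∀ i, 0 < p i ∧ p i < 1) (hc : ∀ i, 0 < c i)
    (l : List (Fin n))
    (hl : l.Nodup ∧ (∀ i, i ∈ l) ∧
      l.Pairwise (fun i j => c i / p i ≤ c j / p j)) :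
    OPTcost p c (fun a => if ∃ i, a i = true then 1 else 0) =
      chainCost c (fun j => 1 - p j) l := by
  obtain ⟨hnd, hmem, hsorted⟩ := hl
  have hp0 : ∀ i, 0 ≤ p i := fun i => (hp i).1.le
  have hp1 : ∀ i, p i ≤ 1 := fun i => (hp i).2.le
  have hpw : l.Pairwise fun i j => c i * p j ≤ c j * p i :=
    hsorted.imp fun hij => (div_le_div_iff₀ (hp _).1 (hp _).1).1 hij
  have hchain : (DTree.chain l).Proper ∅ := DTree.proper_chain hnd (by simp)
  refine IsLeast.csInf_eq
    ⟨⟨DTree.chain l, hchain, fun a => by simp [DTree.eval_chain, hmem], ?_⟩, ?_⟩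
  · rw [DTree.sum_cost_mul_pr_eq_expectedCost p c hchain, DTree.expectedCost_chain]
  · rintro x ⟨T, hT, heval, rfl⟩
    have hperm : (T.path fun _ => false).Perm l :=
      (List.perm_ext_iff_of_nodup (hT.nodup_path _).1 hnd).2 fun i =>
        iff_of_true (DTree.mem_path_false_of_eval_eq_or heval i) (hmem i)
    rw [DTree.sum_cost_mul_pr_eq_expectedCost p c hT]
    exact (chainCost_le_of_perm hp1 hpw hperm).trans
      (T.chainCost_path_false_le_expectedCost hp0 hp1 fun i => (hc i).le)

theorem stmt13 {n : ℕ} (hn : 1 ≤ n) (p c : Fin n → ℝ)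
    (hp : ∀ i, 0 < p i ∧ p i < 1) (hc : ∀ i, 0 < c i)
    (l : List (Fin n))
    (hl : l.Nodup ∧ (∀ i, i ∈ l) ∧
      l.Pairwise (fun i j => c i / p i ≤ c j / p j)) :
    OPTcost p c (fun a => if ∃ i, a i = true then 1 else 0) =
      chainCost c (fun j => 1 - p j) l :=
  stmt13_general p c hp hc l hl
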